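/- Let G be a graph on n vertices containing no path on 4 vertices as a subgraph. Then G has at most n edges. -/

import Mathlib

open SimpleGraph

/-- `H` is contained in `G` as a subgraph: there is an injective map preserving adjacency. -/
def Contains {α β : Type*} (G : SimpleGraph α) (H : SimpleGraph β) : Prop :=
  ∃ f : β ↪ α, ∀ a b, H.Adj a b → G.Adj (f a) (f b)

/-- The join of two graphs: all cross edges are added. -/
def graphJoin {α β : Type*} (G : SimpleGraph α) (H : SimpleGraph β) : SimpleGraph (α ⊕ β) where
  Adj x y :=
    match x, y with
    | Sum.inl a, Sum.inl b => G.Adj a b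
    | Sum.inl _, Sum.inr _ => True
    | Sum.inr _, Sum.inl _ => True
    | Sum.inr a, Sum.inr b => H.Adj a b
  symm := by
    constructor
    rintro (a|a) (b|b) h
    · exact h.symm
    · trivial
    · trivial
    · exact h.symm
  loopless := by
    constructor
    rintro (a|a) h
    · exact G.irrefl h
    · exact H.irrefl h

/-- The join of a clique on `t` vertices with an independent set of `m` vertices. -/
def cliqueIndepJoin (t m : ℕ) : SimpleGraph (Fin t ⊕ Fin m) :=
  graphJoin (completeGraph (Fin t)) (⊥ : SimpleGraph (Fin m))

/-!
Give every edge `uv` the weight `1 / deg u + 1 / deg v`. Distributing this weight back to the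
endpoints, each non-isolated vertex receives exactly `1`, so the total weight is at most `n`.
Without a path on four vertices, an endpoint of degree at least three forces the other endpoint
to be a leaf (a second neighbour of it and a third one of the first endpoint would span a path
`w u v x`). Hence every edge has a leaf endpoint or two endpoints of degree two, and its weight
is at least `1`.
-/

open Finset

namespace SimpleGraph

variable {V : Type*} {G : SimpleGraph V}

lemma contains_pathGraph_four {a b c d : V} (hab : G.Adj a b) (hbc : G.Adj b c)
    (hcd : G.Adj c d) (hac : a ≠ c) (had : a ≠ d) (hbd : b ≠ d) :
    Contains G (pathGraph 4) := by
  refine ⟨⟨![a, b, c, d], ?_⟩, ?_⟩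
  · intro i j hij
    fin_cases i <;> fin_cases j <;>
      simp_all [hab.ne, hbc.ne, hcd.ne, hab.ne', hbc.ne', hcd.ne', hac.symm, had.symm, hbd.symm]
  · intro i j hij
    rw [pathGraph_adj] at hij
    change G.Adj (![a, b, c, d] i) (![a, b, c, d] j)
    fin_cases i <;> fin_cases j <;> simp [hab, hbc, hcd, hab.symm, hbc.symm, hcd.symm] at hij ⊢

variable [Fintype V] [DecidableRel G.Adj]

lemma degree_le_two_of_adj (hP4 : ¬ Contains G (pathGraph 4)) {u v : V} (huv : G.Adj u v)
    (hv : 2 ≤ G.degree v) : G.degree u ≤ 2 := by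
  classical
  by_contra! hu
  obtain ⟨x, hvx, hxu⟩ : ∃ x ∈ G.neighborFinset v, x ≠ u :=
    exists_mem_ne (by rwa [card_neighborFinset_eq_degree]) u
  obtain ⟨w, huw, hw⟩ : ∃ w ∈ G.neighborFinset u, w ∉ ({v, x} : Finset V) :=
    exists_mem_notMem_of_card_lt_card
      (by rw [card_neighborFinset_eq_degree]; exact (card_le_two).trans_lt hu)
  rw [mem_neighborFinset] at hvx huw
  simp only [mem_insert, mem_singleton, not_or] at hw
  exact hP4 (contains_pathGraph_four huw.symm huv hvx hw.1 hw.2 hxu.symm)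

lemma one_le_inv_degree_add_inv_degree (hP4 : ¬ Contains G (pathGraph 4)) {u v : V}
    (huv : G.Adj u v) : 1 ≤ (G.degree u : ℚ)⁻¹ + (G.degree v : ℚ)⁻¹ := by
  have hu : 0 < G.degree u := G.degree_pos_iff_exists_adj u |>.mpr ⟨v, huv⟩
  have hv : 0 < G.degree v := G.degree_pos_iff_exists_adj v |>.mpr ⟨u, huv.symm⟩
  by_cases hu1 : G.degree u = 1
  · rw [hu1, Nat.cast_one, inv_one]; exact le_add_of_nonneg_right (by positivity)
  by_cases hv1 : G.degree v = 1
  · rw [hv1, Nat.cast_one, inv_one]; exact le_add_of_nonneg_left (by positivity)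
  have hu2 : G.degree u = 2 := by have := degree_le_two_of_adj hP4 huv (by omega); omega
  have hv2 : G.degree v = 2 := by have := degree_le_two_of_adj hP4 huv.symm (by omega); omega
  rw [hu2, hv2]; norm_num

variable (G)

lemma sum_sum_neighborFinset_comm {M : Type*} [AddCommMonoid M] (f : V → V → M) :
    ∑ v, ∑ u ∈ G.neighborFinset v, f u v = ∑ v, ∑ u ∈ G.neighborFinset v, f v u :=
  sum_comm' (by simp [adj_comm])

lemma card_edgeFinset_le_card_of_one_le_inv_degree_add_inv_degree [DecidableEq V]
    (h : ∀ u v, G.Adj u v → 1 ≤ (G.degree u : ℚ)⁻¹ + (G.degree v : ℚ)⁻¹) :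
    #G.edgeFinset ≤ Fintype.card V := by
  have hweight : ∑ v, ∑ _u ∈ G.neighborFinset v, (G.degree v : ℚ)⁻¹ ≤ Fintype.card V := by
    simp only [sum_const, card_neighborFinset_eq_degree, nsmul_eq_mul]
    calc ∑ v, (G.degree v : ℚ) * (G.degree v : ℚ)⁻¹ ≤ ∑ _v : V, (1 : ℚ) :=
          sum_le_sum fun v _ => mul_inv_le_one
      _ = Fintype.card V := by simp
  have htwice : (2 * #G.edgeFinset : ℚ) ≤ 2 * Fintype.card V := by
    calc (2 * #G.edgeFinset : ℚ) = ∑ v, ∑ _u ∈ G.neighborFinset v, (1 : ℚ) := by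
          simp only [sum_const, card_neighborFinset_eq_degree, nsmul_one]
          exact_mod_cast (G.sum_degrees_eq_twice_card_edges).symm
      _ ≤ ∑ v, ∑ u ∈ G.neighborFinset v, ((G.degree u : ℚ)⁻¹ + (G.degree v : ℚ)⁻¹) :=
          sum_le_sum fun v _ => sum_le_sum fun u hu => h u v ((mem_neighborFinset G v u).1 hu).symm
      _ = 2 * ∑ v, ∑ _u ∈ G.neighborFinset v, (G.degree v : ℚ)⁻¹ := by
          simp only [sum_add_distrib, G.sum_sum_neighborFinset_comm fun u _ => (G.degree u : ℚ)⁻¹]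
          ring
      _ ≤ 2 * Fintype.card V := by gcongr
  exact_mod_cast le_of_mul_le_mul_left htwice two_pos

end SimpleGraph

/-- Erdős–Gallai, case k = 3: a graph on `n` vertices with no path on
4 vertices has at most `n` edges. -/
theorem stmt_7 {V : Type} [Fintype V] (G : SimpleGraph V)
    (hP4 : ¬ Contains G (SimpleGraph.pathGraph 4)) :
    G.edgeSet.ncard ≤ Fintype.card V := by
  classical
  rw [← coe_edgeFinset, Set.ncard_coe_finset]
  exact G.card_edgeFinset_le_card_of_one_le_inv_degree_add_inv_degree
    fun _ _ huv => one_le_inv_degree_add_inv_degree hP4 huv
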